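/- Every distribution over {0,1}^n is (⌊log₂ n⌋/n + 1/n)-close, in Hamming earth mover's distance, to some 2^n-grained distribution. -/

import Mathlib

open Finset
open scoped Classical

noncomputable section

/-- A probability distribution on a finite type, given as a mass function. -/
def IsDist {α : Type*} [Fintype α] (P : α → ℝ) : Prop :=
  (∀ x, 0 ≤ P x) ∧ ∑ x, P x = 1

/-- A coupling of two mass functions. -/
def IsCoupling {α : Type*} [Fintype α] (P Q : α → ℝ) (W : α → α → ℝ) : Prop :=
  (∀ x y, 0 ≤ W x y) ∧ (∀ x, ∑ y, W x y = P x) ∧ (∀ y, ∑ x, W x y = Q y)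

/-- Earth mover's distance with respect to a cost function `d`. -/
def emd {α : Type*} [Fintype α] (d : α → α → ℝ) (P Q : α → ℝ) : ℝ :=
  sInf {c : ℝ | ∃ W, IsCoupling P Q W ∧ c = ∑ x, ∑ y, W x y * d x y}

/-- Total variation distance. -/
def tv {α : Type*} [Fintype α] (P Q : α → ℝ) : ℝ :=
  (∑ x, |P x - Q x|) / 2

/-- Relative Hamming distance on `n`-bit strings. -/
def relHamming {n : ℕ} (x y : Fin n → Bool) : ℝ :=
  (hammingDist x y : ℝ) / n

/-- Support size of a mass function. -/
def suppCard {α : Type*} [Fintype α] (P : α → ℝ) : ℕ :=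
  (univ.filter fun x => P x ≠ 0).card

/-- Pushforward of a mass function along a map. -/
def push {α β : Type*} [Fintype α] (f : α → β) (P : α → ℝ) : β → ℝ :=
  fun y => ∑ x ∈ univ.filter (fun x => f x = y), P x


/-!
Fix `ℓ = ⌊log₂ n⌋` coordinates and set them to `false`. This moves every point by relative
Hamming distance at most `ℓ / n` and pushes `P` onto at most `2 ^ (n - ℓ)` points. Rounding the
pushed masses to multiples of `2 ^ (-n)` moves each of them by less than `2 ^ (-n)`, so costs total
variation at most `2 ^ (n - ℓ) / 2 ^ (n + 1) = 2 ^ (-(ℓ + 1)) < 1 / n`; as the relative Hamming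
distance is at most `1`, the maximal coupling transports at cost at most the total variation.
Gluing the two couplings gives a coupling of cost at most `ℓ / n + 1 / n`.
-/

section Transport

variable {α : Type*} [Fintype α]

def transportCost (d : α → α → ℝ) (W : α → α → ℝ) : ℝ :=
  ∑ x, ∑ y, W x y * d x y

lemma emd_le_transportCost {d : α → α → ℝ} (hd : ∀ x y, 0 ≤ d x y) {P Q : α → ℝ}
    {W : α → α → ℝ} (hW : IsCoupling P Q W) : emd d P Q ≤ transportCost d W := by
  refine csInf_le ⟨0, ?_⟩ ⟨W, hW, rfl⟩
  rintro _ ⟨W', hW', rfl⟩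
  exact sum_nonneg fun x _ => sum_nonneg fun y _ => mul_nonneg (hW'.1 x y) (hd x y)

namespace IsCoupling

variable {P Q : α → ℝ} {W : α → α → ℝ}

lemma eq_zero_of_left_eq_zero (hW : IsCoupling P Q W) {x : α} (hx : P x = 0) (y : α) :
    W x y = 0 :=
  (sum_eq_zero_iff_of_nonneg fun y _ => hW.1 x y).1 ((hW.2.1 x).trans hx) y (mem_univ y)

lemma eq_zero_of_right_eq_zero (hW : IsCoupling P Q W) {y : α} (hy : Q y = 0) (x : α) :
    W x y = 0 :=
  (sum_eq_zero_iff_of_nonneg fun x _ => hW.1 x y).1 ((hW.2.2 y).trans hy) x (mem_univ x)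

end IsCoupling

/-- The mass `W₁ x z` is sent on according to the conditional law `W₂ z · / R z`; where `R z = 0`
both `W₁ · z` and `W₂ z ·` vanish, so the junk value `/ 0 = 0` is harmless. -/
def glue (R : α → ℝ) (W₁ W₂ : α → α → ℝ) : α → α → ℝ :=
  fun x y => ∑ z, W₁ x z * W₂ z y / R z

variable {P Q R : α → ℝ} {W₁ W₂ : α → α → ℝ}

lemma IsCoupling.glue (h₁ : IsCoupling P R W₁) (h₂ : IsCoupling R Q W₂) :
    IsCoupling P Q (glue R W₁ W₂) := by
  have hR : ∀ z, 0 ≤ R z := fun z => h₂.2.1 z ▸ sum_nonneg fun y _ => h₂.1 z y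
  refine ⟨fun x y => sum_nonneg fun z _ => div_nonneg (mul_nonneg (h₁.1 x z) (h₂.1 z y)) (hR z),
    fun x => ?_, fun y => ?_⟩
  · calc ∑ y, ∑ z, W₁ x z * W₂ z y / R z = ∑ z, W₁ x z * R z / R z := by
          rw [sum_comm]; simp only [← sum_div, ← mul_sum, h₂.2.1]
      _ = P x := by
          simp only [mul_div_cancel_of_imp fun hz => h₁.eq_zero_of_right_eq_zero hz x, h₁.2.1]
  · calc ∑ x, ∑ z, W₁ x z * W₂ z y / R z = ∑ z, R z * W₂ z y / R z := by
          rw [sum_comm]; simp only [← sum_div, ← sum_mul, h₁.2.2]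
      _ = Q y := by
          simp only [mul_div_cancel_left_of_imp fun hz => h₂.eq_zero_of_left_eq_zero hz y, h₂.2.2]

lemma transportCost_glue_le {d : α → α → ℝ} (htri : ∀ x y z, d x z ≤ d x y + d y z)
    (h₁ : IsCoupling P R W₁) (h₂ : IsCoupling R Q W₂) :
    transportCost d (glue R W₁ W₂) ≤ transportCost d W₁ + transportCost d W₂ := by
  have hR : ∀ z, 0 ≤ R z := fun z => h₂.2.1 z ▸ sum_nonneg fun y _ => h₂.1 z y
  have hpath : ∀ x y, glue R W₁ W₂ x y * d x y ≤
      ∑ z, W₁ x z * W₂ z y / R z * d x z + ∑ z, W₁ x z * W₂ z y / R z * d z y := by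
    intro x y
    rw [glue, sum_mul, ← sum_add_distrib]
    gcongr with z
    rw [← mul_add]
    exact mul_le_mul_of_nonneg_left (htri x z y)
      (div_nonneg (mul_nonneg (h₁.1 x z) (h₂.1 z y)) (hR z))
  have hfirst : ∑ x, ∑ y, ∑ z, W₁ x z * W₂ z y / R z * d x z = transportCost d W₁ := by
    refine sum_congr rfl fun x _ => ?_
    rw [sum_comm]
    refine sum_congr rfl fun z _ => ?_
    calc ∑ y, W₁ x z * W₂ z y / R z * d x z = W₁ x z * R z / R z * d x z := by
          simp only [← sum_mul, ← sum_div, ← mul_sum, h₂.2.1]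
      _ = W₁ x z * d x z := by
          rw [mul_div_cancel_of_imp fun hz => h₁.eq_zero_of_right_eq_zero hz x]
  have hsecond : ∑ x, ∑ y, ∑ z, W₁ x z * W₂ z y / R z * d z y = transportCost d W₂ := by
    calc ∑ x, ∑ y, ∑ z, W₁ x z * W₂ z y / R z * d z y
        = ∑ y, ∑ z, ∑ x, W₁ x z * W₂ z y / R z * d z y := by
          rw [sum_comm]; exact sum_congr rfl fun y _ => sum_comm
      _ = ∑ y, ∑ z, W₂ z y * d z y := by
          refine sum_congr rfl fun y _ => sum_congr rfl fun z _ => ?_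
          simp only [← sum_mul, ← sum_div, h₁.2.2]
          rw [mul_div_cancel_left_of_imp fun hz => h₂.eq_zero_of_left_eq_zero hz y]
      _ = transportCost d W₂ := sum_comm
  calc transportCost d (glue R W₁ W₂)
      ≤ ∑ x, ∑ y, (∑ z, W₁ x z * W₂ z y / R z * d x z + ∑ z, W₁ x z * W₂ z y / R z * d z y) :=
        sum_le_sum fun x _ => sum_le_sum fun y _ => hpath x y
    _ = transportCost d W₁ + transportCost d W₂ := by
        simp only [sum_add_distrib, hfirst, hsecond]

def mapCoupling (f : α → α) (P : α → ℝ) : α → α → ℝ :=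
  fun x y => if y = f x then P x else 0

lemma isCoupling_mapCoupling (hP : ∀ x, 0 ≤ P x) (f : α → α) :
    IsCoupling P (push f P) (mapCoupling f P) := by
  refine ⟨fun x y => ?_, fun x => by simp [mapCoupling], fun y => ?_⟩
  · unfold mapCoupling; split_ifs <;> simp [hP x]
  · simp only [mapCoupling, push, sum_filter, eq_comm]

lemma transportCost_mapCoupling_le {d : α → α → ℝ} {f : α → α} {c : ℝ} (hP : IsDist P)
    (hf : ∀ x, d x (f x) ≤ c) : transportCost d (mapCoupling f P) ≤ c :=
  calc transportCost d (mapCoupling f P) = ∑ x, P x * d x (f x) := by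
        simp [transportCost, mapCoupling]
    _ ≤ ∑ x, P x * c := sum_le_sum fun x _ => mul_le_mul_of_nonneg_left (hf x) (hP.1 x)
    _ = c := by rw [← sum_mul, hP.2, one_mul]

lemma sum_sub_min_eq_tv_left (hPQ : ∑ x, P x = ∑ x, Q x) :
    ∑ x, (P x - min (P x) (Q x)) = tv P Q := by
  have habs : ∀ x, |P x - Q x| = (P x - min (P x) (Q x)) + (Q x - min (P x) (Q x)) := by
    intro x
    rcases le_total (P x) (Q x) with h | h
    · rw [abs_of_nonpos (sub_nonpos.2 h), min_eq_left h]; ring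
    · rw [abs_of_nonneg (sub_nonneg.2 h), min_eq_right h]; ring
  simp only [tv, habs, sum_add_distrib, sum_sub_distrib, hPQ]
  ring

lemma sum_sub_min_eq_tv_right (hPQ : ∑ x, P x = ∑ x, Q x) :
    ∑ x, (Q x - min (P x) (Q x)) = tv P Q := by
  simpa only [min_comm, tv, abs_sub_comm] using sum_sub_min_eq_tv_left hPQ.symm

lemma tv_nonneg (P Q : α → ℝ) : 0 ≤ tv P Q := by
  unfold tv; positivity

/-- The excesses `P - min P Q` and `Q - min P Q` both have total mass `tv P Q`, so the second
summand couples them; when `tv P Q = 0` they vanish and the junk `/ 0` does no harm. -/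
def maxCoupling (P Q : α → ℝ) : α → α → ℝ :=
  fun x y => (if x = y then min (P x) (Q x) else 0) +
    (P x - min (P x) (Q x)) * (Q y - min (P y) (Q y)) / tv P Q

lemma isCoupling_maxCoupling (hP : ∀ x, 0 ≤ P x) (hQ : ∀ x, 0 ≤ Q x)
    (hPQ : ∑ x, P x = ∑ x, Q x) : IsCoupling P Q (maxCoupling P Q) := by
  have hP0 : tv P Q = 0 → ∀ x, P x - min (P x) (Q x) = 0 := fun h x =>
    (sum_eq_zero_iff_of_nonneg fun x _ => sub_nonneg.2 (min_le_left _ _)).1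
      ((sum_sub_min_eq_tv_left hPQ).trans h) x (mem_univ x)
  have hQ0 : tv P Q = 0 → ∀ x, Q x - min (P x) (Q x) = 0 := fun h x =>
    (sum_eq_zero_iff_of_nonneg fun x _ => sub_nonneg.2 (min_le_right _ _)).1
      ((sum_sub_min_eq_tv_right hPQ).trans h) x (mem_univ x)
  refine ⟨fun x y => ?_, fun x => ?_, fun y => ?_⟩
  · refine add_nonneg ?_ (div_nonneg (mul_nonneg ?_ ?_) (tv_nonneg P Q))
    · split_ifs <;> simp [hP x, hQ x]
    · exact sub_nonneg.2 (min_le_left _ _)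
    · exact sub_nonneg.2 (min_le_right _ _)
  · simp only [maxCoupling, sum_add_distrib, ← sum_div, ← mul_sum, sum_sub_min_eq_tv_right hPQ,
      mul_div_cancel_of_imp fun h => hP0 h x]
    simp
  · simp only [maxCoupling, sum_add_distrib, ← sum_div, ← sum_mul, sum_sub_min_eq_tv_left hPQ,
      mul_div_cancel_left_of_imp fun h => hQ0 h y]
    simp

lemma transportCost_maxCoupling_le {d : α → α → ℝ} (hd : ∀ x, d x x = 0)
    (hd_le_one : ∀ x y, d x y ≤ 1) (hPQ : ∑ x, P x = ∑ x, Q x) :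
    transportCost d (maxCoupling P Q) ≤ tv P Q := by
  set excess : α → α → ℝ :=
    fun x y => (P x - min (P x) (Q x)) * (Q y - min (P y) (Q y)) / tv P Q
  have hexcess : ∀ x y, 0 ≤ excess x y := fun x y =>
    div_nonneg (mul_nonneg (sub_nonneg.2 (min_le_left _ _)) (sub_nonneg.2 (min_le_right _ _)))
      (tv_nonneg P Q)
  have hterm : ∀ x y, maxCoupling P Q x y * d x y ≤ excess x y := by
    intro x y
    by_cases hxy : x = y
    · subst hxy; simpa [hd] using hexcess x x
    · simpa [maxCoupling, hxy] using mul_le_of_le_one_right (hexcess x y) (hd_le_one x y)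
  calc transportCost d (maxCoupling P Q) ≤ ∑ x, ∑ y, excess x y :=
        sum_le_sum fun x _ => sum_le_sum fun y _ => hterm x y
    _ = tv P Q * tv P Q / tv P Q := by
        simp only [excess, ← sum_div, ← mul_sum, ← sum_mul, sum_sub_min_eq_tv_left hPQ,
          sum_sub_min_eq_tv_right hPQ]
    _ = tv P Q := mul_self_div_self _

end Transport

section Rounding

variable {α : Type*} [Fintype α]

def IsGrained (m : ℕ) (Q : α → ℝ) : Prop :=
  ∀ x, ∃ k : ℕ, Q x = k / m

/-- Round every mass down to a multiple of `1 / N` and hand the missing units out, one each, to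
points of the support: every mass then moves by less than `1 / N`. -/
lemma exists_isGrained_tv_le {p : α → ℝ} (hp : IsDist p) {N : ℕ} (hN : 0 < N) :
    ∃ q, IsDist q ∧ IsGrained N q ∧ tv p q ≤ suppCard p / (2 * N) := by
  set s := univ.filter fun x => p x ≠ 0
  set F : α → ℕ := fun x => ⌊N * p x⌋₊
  have hNpos : (0 : ℝ) < N := Nat.cast_pos.2 hN
  have hF_le : ∀ x, (F x : ℝ) ≤ N * p x := fun x => Nat.floor_le (by positivity [hp.1 x])
  have hF_gt : ∀ x, N * p x < F x + 1 := fun x => Nat.lt_floor_add_one _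
  have hF_zero : ∀ x, x ∉ s → F x = 0 := fun x hx => by
    simp [F, show p x = 0 by simpa [s] using hx]
  have hmass : ∑ x, N * p x = N := by rw [← mul_sum, hp.2, mul_one]
  have hsumF : ∑ x, F x ≤ N := by
    have : ((∑ x, F x : ℕ) : ℝ) ≤ N := by
      push_cast; exact hmass ▸ sum_le_sum fun x _ => hF_le x
    exact_mod_cast this
  have hdeficit : N - ∑ x, F x ≤ #s := by
    have hpoint : ∀ x, N * p x ≤ F x + if x ∈ s then 1 else 0 := fun x => by
      by_cases hx : x ∈ s
      · simpa [hx] using (hF_gt x).le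
      · simp [hx, hF_zero x hx, show p x = 0 by simpa [s] using hx]
    have : (N : ℝ) ≤ ((∑ x, F x + #s : ℕ) : ℝ) := by
      have := hmass ▸ sum_le_sum fun x (_ : x ∈ univ) => hpoint x
      simpa [sum_add_distrib] using this
    have := Nat.cast_le.1 this
    omega
  obtain ⟨C, hCs, hC⟩ := exists_subset_card_eq hdeficit
  set q : α → ℝ := fun x => ((F x : ℝ) + if x ∈ C then 1 else 0) / N
  have hq_sum : ∑ x, q x = 1 := by
    have : ((∑ x, F x + #C : ℕ) : ℝ) = N := by congr 1; omega
    simp only [q, ← sum_div, sum_add_distrib]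
    rw [div_eq_one_iff_eq hNpos.ne', ← this]
    simp
  have hdev : ∀ x, |p x - q x| ≤ (if x ∈ s then 1 else 0) / N := by
    intro x
    have hpq : p x - q x = (N * p x - F x - if x ∈ C then 1 else 0) / N := by
      simp only [q]; field_simp; ring
    rw [hpq, abs_div, abs_of_pos hNpos]
    gcongr
    by_cases hx : x ∈ s
    · rw [if_pos hx, abs_le]
      constructor <;> split_ifs <;> linarith [hF_le x, hF_gt x]
    · have hxC : x ∉ C := fun h => hx (hCs h)
      simp [hx, hxC, hF_zero x hx, show p x = 0 by simpa [s] using hx]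
  refine ⟨q, ⟨fun x => by positivity, hq_sum⟩, fun x => ⟨F x + if x ∈ C then 1 else 0, ?_⟩, ?_⟩
  · simp [q]
  · calc tv p q ≤ (∑ x, (if x ∈ s then 1 else 0 : ℝ) / N) / 2 :=
          div_le_div_of_nonneg_right (sum_le_sum fun x _ => hdev x) zero_le_two
      _ = suppCard p / (2 * N) := by
          rw [← sum_div, sum_boole, filter_mem_eq_inter, univ_inter, suppCard]
          ring

end Rounding

section Push

variable {α β : Type*} [Fintype α] [Fintype β]

lemma IsDist.push {P : α → ℝ} (hP : IsDist P) (f : α → β) : IsDist (push f P) :=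
  ⟨fun _ => sum_nonneg fun x _ => hP.1 x,
    (sum_fiberwise_of_maps_to (fun x _ => mem_univ (f x)) P).trans hP.2⟩

lemma suppCard_push_le [DecidableEq β] (f : α → β) (P : α → ℝ) :
    suppCard (push f P) ≤ #(univ.image f) := by
  refine card_le_card fun y hy => ?_
  by_contra hfy
  refine (mem_filter.1 hy).2 (sum_eq_zero fun x hx => ?_)
  have hx : f x = y := by simpa using hx
  exact absurd (hx ▸ mem_image_of_mem f (mem_univ x)) hfy

end Push

section Hamming

variable {ι β : Type*} [Fintype ι] [DecidableEq ι] [DecidableEq β]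

lemma hammingDist_piecewise_le (S : Finset ι) (b x : ι → β) :
    hammingDist x (S.piecewise b x) ≤ #S :=
  card_le_card fun i hi => by
    by_contra hiS
    exact (mem_filter.1 hi).2 (by simp [hiS])

lemma card_image_piecewise_le [Fintype β] (S : Finset ι) (b : ι → β) :
    #(univ.image fun x => S.piecewise b x) ≤ Fintype.card β ^ (Fintype.card ι - #S) := by
  have hinj : Set.InjOn (fun y : ι → β => fun i : ↥Sᶜ => y i)
      ↑(univ.image fun x => S.piecewise b x) := by
    rintro _ hy _ hz h
    obtain ⟨y, -, rfl⟩ := mem_image.1 hy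
    obtain ⟨z, -, rfl⟩ := mem_image.1 hz
    funext i
    by_cases hi : i ∈ S
    · simp [hi]
    · exact congrFun h ⟨i, mem_compl.2 hi⟩
  calc #(univ.image fun x => S.piecewise b x)
      ≤ #(univ : Finset (↥Sᶜ → β)) := card_le_card_of_injOn _ (fun _ _ => mem_univ _) hinj
    _ = Fintype.card β ^ (Fintype.card ι - #S) := by
        rw [card_univ, Fintype.card_fun, Fintype.card_coe, card_compl]

end Hamming

section RelHamming

variable {n : ℕ}

lemma relHamming_nonneg (x y : Fin n → Bool) : 0 ≤ relHamming x y := by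
  unfold relHamming; positivity

lemma relHamming_self (x : Fin n → Bool) : relHamming x x = 0 := by
  simp [relHamming]

lemma relHamming_le_one (x y : Fin n → Bool) : relHamming x y ≤ 1 :=
  div_le_one_of_le₀ (by exact_mod_cast (hammingDist_le_card_fintype.trans_eq (Fintype.card_fin n)))
    n.cast_nonneg

lemma relHamming_triangle (x y z : Fin n → Bool) :
    relHamming x z ≤ relHamming x y + relHamming y z := by
  rw [relHamming, relHamming, relHamming, ← add_div]
  gcongr
  exact_mod_cast hammingDist_triangle x y z

end RelHamming

lemma two_pow_sub_log_div_le {n : ℕ} (hn : 0 < n) :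
    (2 ^ (n - Nat.log 2 n) : ℝ) / (2 * 2 ^ n) ≤ 1 / n := by
  rw [div_le_div_iff₀ (by positivity) (by exact_mod_cast hn), one_mul]
  have hlog : n < 2 ^ (Nat.log 2 n + 1) := Nat.lt_pow_succ_log_self one_lt_two n
  have : 2 ^ (n - Nat.log 2 n) * n ≤ 2 * 2 ^ n := calc
    2 ^ (n - Nat.log 2 n) * n ≤ 2 ^ (n - Nat.log 2 n) * 2 ^ (Nat.log 2 n + 1) := by gcongr
    _ = 2 * 2 ^ n := by
        rw [← pow_add, ← pow_succ']
        congr 1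
        have := Nat.log_le_self 2 n
        omega
  exact_mod_cast this

/-- every distribution over `{0,1}^n` is `(⌊log₂ n⌋/n + 1/n)`-close in
Hamming EMD to some `2^n`-grained distribution. -/
theorem close_to_grained {n : ℕ} (hn : 0 < n)
    (P : (Fin n → Bool) → ℝ) (hP : IsDist P) :
    ∃ Q : (Fin n → Bool) → ℝ, IsDist Q ∧
      (∀ x, ∃ k : ℕ, Q x = (k : ℝ) / 2 ^ n) ∧
      emd relHamming P Q ≤ (Nat.log 2 n : ℝ) / n + 1 / n := by
  obtain ⟨S, -, hS⟩ := exists_subset_card_eq (s := (univ : Finset (Fin n)))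
    (by simpa using Nat.log_le_self 2 n)
  set g : (Fin n → Bool) → (Fin n → Bool) := fun x => S.piecewise (fun _ => false) x
  set R := push g P
  have hR : IsDist R := hP.push g
  obtain ⟨Q, hQ, hQ_grained, hRQ⟩ := exists_isGrained_tv_le hR (N := 2 ^ n) (by positivity)
  have hsum : ∑ x, R x = ∑ x, Q x := hR.2.trans hQ.2.symm
  have h₁ := isCoupling_mapCoupling hP.1 g
  have h₂ := isCoupling_maxCoupling hR.1 hQ.1 hsum
  have hmove : ∀ x, relHamming x (g x) ≤ Nat.log 2 n / n := fun x => by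
    rw [relHamming, ← hS]
    gcongr
    exact_mod_cast hammingDist_piecewise_le S _ x
  have hsupp : suppCard R ≤ 2 ^ (n - Nat.log 2 n) := by
    simpa [hS] using (suppCard_push_le g P).trans (card_image_piecewise_le S fun _ => false)
  have htv : tv R Q ≤ 1 / n :=
    calc tv R Q ≤ suppCard R / (2 * (2 ^ n : ℕ)) := hRQ
      _ ≤ (2 ^ (n - Nat.log 2 n) : ℝ) / (2 * 2 ^ n) := by push_cast; gcongr; exact_mod_cast hsupp
      _ ≤ 1 / n := two_pow_sub_log_div_le hn
  refine ⟨Q, hQ, fun x => by simpa using hQ_grained x, ?_⟩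
  calc emd relHamming P Q ≤ transportCost relHamming (glue R (mapCoupling g P) (maxCoupling R Q)) :=
        emd_le_transportCost relHamming_nonneg (h₁.glue h₂)
    _ ≤ transportCost relHamming (mapCoupling g P) + transportCost relHamming (maxCoupling R Q) :=
        transportCost_glue_le relHamming_triangle h₁ h₂
    _ ≤ Nat.log 2 n / n + 1 / n :=
        add_le_add (transportCost_mapCoupling_le hP hmove)
          ((transportCost_maxCoupling_le relHamming_self relHamming_le_one hsum).trans htv)
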